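/- arXiv:2603.20722 — 3 statements merged into one kernel-verified Lean document; each statement's English description precedes it below -/
import Mathlib

section
/- Let n ≥ 3 and k ∈ ℤ_n nonzero, with n ≡ 0 (mod 3) and k ≢ 0 (mod 3). Then for each j ∈ {0,1,2}, the set C_j = {u_{3i+j}, v_{3i+j} : i ∈ ℤ_n} is a total perfect code in GP(n,k), i.e., every vertex of GP(n,k) is adjacent to exactly one vertex of C_j. -/
/-
The reduction i ↦ i mod 3 on both rims is a covering map GP(n,k) → GP(3,k): since 3 ∤ 2k
(and 3 ∤ 2), the three neighbours u_{i±1}, v_i of u_i, resp. v_{i±k}, u_i of v_i, have distinct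
images, which are exactly the three neighbours of the image vertex. Preimages of total perfect
codes under coverings are total perfect codes, and C_j is the preimage of {u_j, v_j}, which is a
total perfect code of the triangular prism GP(3,k) = GP(3,1).
-/

/-- The generalized Petersen graph GP(n,k): vertices are `Sum.inl i` (outer, u_i)
and `Sum.inr i` (inner, v_i) for `i : ZMod n`. -/
def GP (n k : ℕ) : SimpleGraph (ZMod n ⊕ ZMod n) where
  Adj x y :=
    match x, y with
    | .inl i, .inl j => i ≠ j ∧ (j = i + 1 ∨ i = j + 1)
    | .inl i, .inr j => i = j
    | .inr i, .inl j => i = j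
    | .inr i, .inr j => i ≠ j ∧ (j = i + (k : ZMod n) ∨ i = j + (k : ZMod n))
  symm := by constructor; rintro (i|i) (j|j) h <;> simp_all <;> tauto
  loopless := by constructor; rintro (i|i) h <;> simp_all

/-- A perfect code: an independent set such that every vertex not in `C`
has exactly one neighbor in `C`. -/
def IsPerfectCode {V : Type*} (G : SimpleGraph V) (C : Set V) : Prop :=
  (∀ x ∈ C, ∀ y ∈ C, ¬ G.Adj x y) ∧ ∀ x ∉ C, ∃! y, y ∈ C ∧ G.Adj x y

/-- A total perfect code: every vertex has exactly one neighbor in `C`. -/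
def IsTotalPerfectCode {V : Type*} (G : SimpleGraph V) (C : Set V) : Prop :=
  ∀ x, ∃! y, y ∈ C ∧ G.Adj x y

open SimpleGraph

structure SimpleGraph.IsCover {V W : Type*} (G : SimpleGraph V) (H : SimpleGraph W)
    (φ : V → W) : Prop where
  map_adj {x y : V} : G.Adj x y → H.Adj (φ x) (φ y)
  injOn_neighborSet (x : V) : Set.InjOn φ (G.neighborSet x)
  exists_lift {x : V} {y' : W} : H.Adj (φ x) y' → ∃ y, G.Adj x y ∧ φ y = y'

theorem IsTotalPerfectCode.preimage {V W : Type*} {G : SimpleGraph V} {H : SimpleGraph W}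
    {φ : V → W} (hφ : G.IsCover H φ) {D : Set W} (hD : IsTotalPerfectCode H D) :
    IsTotalPerfectCode G (φ ⁻¹' D) := by
  intro x
  obtain ⟨z, ⟨hzD, hxz⟩, hz⟩ := hD (φ x)
  obtain ⟨y, hxy, rfl⟩ := hφ.exists_lift hxz
  refine ⟨y, ⟨hzD, hxy⟩, fun y' ⟨hy'D, hxy'⟩ => hφ.injOn_neighborSet x hxy' hxy ?_⟩
  exact hz _ ⟨hy'D, hφ.map_adj hxy'⟩

section Circulant

variable {A B F : Type*} [AddCommGroup A] [AddCommGroup B] [FunLike F A B]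
  [AddMonoidHomClass F A B]

theorem circulantGraph_singleton_adj {c a b : A} (hc : c ≠ 0) :
    (circulantGraph {c}).Adj a b ↔ b = a + c ∨ b = a - c := by
  simp only [circulantGraph_adj, Set.mem_singleton_iff]
  grind

theorem circulantGraph_isCover (f : F) {c : A} {d : B} (hfc : f c = d) (hd : d + d ≠ 0) :
    (circulantGraph {c}).IsCover (circulantGraph {d}) f := by
  have hd0 : d ≠ 0 := by rintro rfl; simp at hd
  have hc0 : c ≠ 0 := by rintro rfl; simp [← hfc] at hd0
  have key : ∀ x, f (x + c) ≠ f (x - c) := fun x h => hd (by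
    simp only [map_add, map_sub, hfc] at h; grind)
  constructor
  · simp only [circulantGraph_singleton_adj hc0, circulantGraph_singleton_adj hd0]
    rintro x _ (rfl | rfl) <;> simp [hfc]
  · simp only [Set.InjOn, mem_neighborSet, circulantGraph_singleton_adj hc0]
    rintro x y (rfl | rfl) y' (rfl | rfl) h
    exacts [rfl, absurd h (key x), absurd h.symm (key x), rfl]
  · simp only [circulantGraph_singleton_adj hc0, circulantGraph_singleton_adj hd0]
    rintro x _ (rfl | rfl)
    exacts [⟨x + c, by simp [hfc]⟩, ⟨x - c, by simp [hfc]⟩]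

end Circulant

theorem ZMod.castHom_eq_natCast_iff {m n : ℕ} (h : m ∣ n) {a : ZMod n} {j : ℕ} :
    ZMod.castHom h (ZMod m) a = j ↔ ∃ i, a = m * i + j := by
  constructor
  · obtain ⟨z, rfl⟩ := ZMod.intCast_surjective a
    rw [map_intCast, ← Int.cast_natCast, ZMod.intCast_eq_intCast_iff_dvd_sub]
    rintro ⟨w, hw⟩
    refine ⟨-w, ?_⟩
    rw [show z = m * -w + j by linarith]
    push_cast; ring
  · rintro ⟨i, rfl⟩
    rw [map_add, map_mul, map_natCast, map_natCast, ZMod.natCast_self, zero_mul, zero_add]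

namespace GP

variable {n k : ℕ}

@[simp] theorem adj_inl_inl {a b : ZMod n} :
    (GP n k).Adj (.inl a) (.inl b) ↔ (circulantGraph {1}).Adj a b := by
  simp only [circulantGraph_adj, Set.mem_singleton_iff]
  show _ ∧ _ ↔ _
  grind

@[simp] theorem adj_inr_inr {a b : ZMod n} :
    (GP n k).Adj (.inr a) (.inr b) ↔ (circulantGraph {(k : ZMod n)}).Adj a b := by
  simp only [circulantGraph_adj, Set.mem_singleton_iff]
  show _ ∧ _ ↔ _
  grind

@[simp] theorem adj_inl_inr {a b : ZMod n} : (GP n k).Adj (.inl a) (.inr b) ↔ a = b := Iff.rfl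

@[simp] theorem adj_inr_inl {a b : ZMod n} : (GP n k).Adj (.inr a) (.inl b) ↔ a = b := Iff.rfl

theorem isCover_sumMap {m : ℕ} (f : ZMod n →+* ZMod m) (hk : ((2 * k : ℕ) : ZMod m) ≠ 0) :
    (GP n k).IsCover (GP m k) (Sum.map f f) := by
  have h2 : (1 : ZMod m) + 1 ≠ 0 := by
    contrapose! hk; push_cast; rw [← one_add_one_eq_two, hk, zero_mul]
  have hcyc := circulantGraph_isCover f (map_one f) h2
  have hspk := circulantGraph_isCover f (map_natCast f k) (by push_cast at hk; rwa [← two_mul])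
  refine ⟨?_, ?_, ?_⟩
  · rintro (a | a) (b | b) h <;>
      simp only [Sum.map_inl, Sum.map_inr, adj_inl_inl, adj_inr_inr, adj_inl_inr,
        adj_inr_inl] at h ⊢
    exacts [hcyc.map_adj h, congrArg f h, congrArg f h, hspk.map_adj h]
  · rintro (a | a) (b | b) hb (b' | b') hb' h <;>
      simp only [mem_neighborSet, adj_inl_inl, adj_inr_inr, adj_inl_inr, adj_inr_inl, Sum.map_inl,
        Sum.map_inr, Sum.inl.injEq, Sum.inr.injEq, reduceCtorEq] at hb hb' h ⊢
    exacts [hcyc.injOn_neighborSet a hb hb' h, hb.symm.trans hb', hb.symm.trans hb',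
      hspk.injOn_neighborSet a hb hb' h]
  · rintro (a | a) (b' | b') h <;>
      simp only [adj_inl_inl, adj_inr_inr, adj_inl_inr, adj_inr_inl, Sum.map_inl,
        Sum.map_inr] at h
    · obtain ⟨b, hab, rfl⟩ := hcyc.exists_lift h
      exact ⟨.inl b, adj_inl_inl.2 hab, rfl⟩
    · exact ⟨.inr a, rfl, congrArg _ h⟩
    · exact ⟨.inl a, rfl, congrArg _ h⟩
    · obtain ⟨b, hab, rfl⟩ := hspk.exists_lift h
      exact ⟨.inr b, adj_inr_inr.2 hab, rfl⟩

theorem three_eq_GP_three_one (hk : (k : ZMod 3) ≠ 0) : GP 3 k = GP 3 1 := by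
  ext (a | a) (b | b)
  · rfl
  · rfl
  · rfl
  · simp only [adj_inr_inr, Nat.cast_one]
    -- on `ZMod 3` the nonzero jump `k` is `1` or `-1`, and `{-1}` gives the same circulant graph
    generalize (k : ZMod 3) = c at hk ⊢
    revert a b c; decide

instance : DecidableRel (GP n k).Adj
  | .inl _, .inl _ => inferInstanceAs (Decidable (_ ∧ _))
  | .inl _, .inr _ => inferInstanceAs (Decidable (_ = _))
  | .inr _, .inl _ => inferInstanceAs (Decidable (_ = _))
  | .inr _, .inr _ => inferInstanceAs (Decidable (_ ∧ _))

theorem isTotalPerfectCode_three (hk : (k : ZMod 3) ≠ 0) (j : ZMod 3) :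
    IsTotalPerfectCode (GP 3 k) {.inl j, .inr j} := by
  rw [three_eq_GP_three_one hk]
  revert j
  unfold IsTotalPerfectCode ExistsUnique
  decide

end GP

theorem stmt_1_general (n k : ℕ) (h3 : n % 3 = 0) (hk3 : k % 3 ≠ 0) (j : ℕ) :
    IsTotalPerfectCode (GP n k)
      {x | ∃ i : ZMod n, x = .inl (3 * i + (j : ZMod n)) ∨
        x = .inr (3 * i + (j : ZMod n))} := by
  have hdvd : 3 ∣ n := Nat.dvd_of_mod_eq_zero h3
  set f := ZMod.castHom hdvd (ZMod 3)
  have hk : (k : ZMod 3) ≠ 0 := by rw [Ne, ZMod.natCast_eq_zero_iff]; omega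
  have h2k : ((2 * k : ℕ) : ZMod 3) ≠ 0 := by rw [Ne, ZMod.natCast_eq_zero_iff]; omega
  have hC : {x | ∃ i : ZMod n, x = .inl (3 * i + (j : ZMod n)) ∨
      x = .inr (3 * i + (j : ZMod n))} =
      Sum.map f f ⁻¹' {.inl (j : ZMod 3), .inr (j : ZMod 3)} := by
    ext (a | a) <;> simp only [Set.mem_preimage, Sum.map_inl, Sum.map_inr, Set.mem_insert_iff,
      Set.mem_singleton_iff, Sum.inl.injEq, Sum.inr.injEq, f, ZMod.castHom_eq_natCast_iff] <;> simp
  rw [hC]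
  exact (GP.isTotalPerfectCode_three hk _).preimage (GP.isCover_sumMap f h2k)

/-- Lemma 2.2: for n ≡ 0 (mod 3) and k ≢ 0 (mod 3), C_j = {u_{3i+j}, v_{3i+j} : i ∈ ℤ_n}
is a total perfect code in GP(n,k), for each j ∈ {0,1,2}. -/
theorem stmt_1 (n k : ℕ) (hn : 3 ≤ n) (hk0 : (k : ZMod n) ≠ 0)
    (h3 : n % 3 = 0) (hk3 : k % 3 ≠ 0) (j : ℕ) (hj : j < 3) :
    IsTotalPerfectCode (GP n k)
      {x | ∃ i : ZMod n, x = .inl (3 * i + (j : ZMod n)) ∨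
        x = .inr (3 * i + (j : ZMod n))} :=
  stmt_1_general n k h3 hk3 j
end

section
/- Let n ≥ 3 and k ∈ ℤ_n nonzero, with n ≡ 0 (mod 6) and k ≡ ±1 (mod 6). Then for each j ∈ {0,1,2,3,4,5}, the set C'_j = {u_{6i+j}, u_{6i+j+1}, v_{6i+j+3}, v_{6i+j+4} : i ∈ ℤ_n} is a total perfect code in GP(n,k). -/
/-!
Since 1 ≢ -1 and k ≢ -k (mod 6), the three neighbours of a vertex of GP(n,k) stay distinct
modulo 6, so reduction modulo 6 maps every neighbourhood of GP(n,k) bijectively onto one of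
GP(6,k). Total perfect codes pull back along such maps, and C'_j is the preimage of the total
perfect code {u_j, u_{j+1}, v_{j+3}, v_{j+4}} of GP(6,1) = GP(6,5), checked by enumeration.
-/

theorem IsTotalPerfectCode.preimage_s2 {V W : Type*} {G : SimpleGraph V} {H : SimpleGraph W}
    {f : V → W} (hf : ∀ x, Set.BijOn f (G.neighborSet x) (H.neighborSet (f x))) {C : Set W}
    (hC : IsTotalPerfectCode H C) : IsTotalPerfectCode G (f ⁻¹' C) := by
  intro x
  obtain ⟨_, ⟨hC', hadj'⟩, huniq⟩ := hC (f x)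
  obtain ⟨y, hxy, rfl⟩ := (hf x).surjOn hadj'
  exact ⟨y, ⟨hC', hxy⟩, fun z ⟨hzC, hxz⟩ => (hf x).injOn hxz hxy (huniq _ ⟨hzC, (hf x).mapsTo hxz⟩)⟩

theorem Set.bijOn_triple {α β : Type*} {f : α → β} {a b c : α}
    (hab : f a ≠ f b) (hac : f a ≠ f c) (hbc : f b ≠ f c) :
    Set.BijOn f {a, b, c} {f a, f b, f c} := by
  have hinj : Set.InjOn f {a, b, c} := by
    rintro x (rfl | rfl | rfl) y (rfl | rfl | rfl) h <;> first | rfl | simp_all [eq_comm]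
  simpa [Set.image_insert_eq, Set.image_pair] using hinj.bijOn_image

theorem ne_and_eq_add_or_eq_add_iff {A : Type*} [AddGroup A] {d : A} (hd : d ≠ 0) (i j : A) :
    (i ≠ j ∧ (j = i + d ∨ i = j + d)) ↔ (j = i + d ∨ j = i - d) := by
  rw [eq_sub_iff_add_eq, eq_comm (a := i)]
  refine ⟨And.right, fun h => ⟨?_, h⟩⟩
  rintro rfl
  simp_all

theorem ZMod.exists_eq_mul_add_iff {m n : ℕ} (h : m ∣ n) (a c : ZMod n) :
    (∃ i, a = m * i + c) ↔ ZMod.castHom h (ZMod m) a = ZMod.castHom h (ZMod m) c := by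
  set φ := ZMod.castHom h (ZMod m)
  constructor
  · rintro ⟨i, rfl⟩
    simp [φ, -ZMod.castHom_apply]
  · intro hac
    obtain ⟨t, ht⟩ : (m : ℤ) ∣ ((a - c).cast : ℤ) := by
      rw [← ZMod.intCast_zmod_eq_zero_iff_dvd, ← map_intCast φ, ZMod.intCast_zmod_cast, map_sub,
        hac, sub_self]
    refine ⟨t, ?_⟩
    have := congrArg (Int.cast : ℤ → ZMod n) ht
    push_cast [ZMod.intCast_zmod_cast] at this
    linear_combination this

instance (n k : ℕ) : DecidableRel (GP n k).Adj := fun x y => by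
  rcases x with i | i <;> rcases y with j | j <;> simp only [GP] <;> infer_instance

namespace GP

variable {m n : ℕ}

theorem natCast_mod (k : ℕ) : GP n (k % n) = GP n k := by
  ext (i | i) (j | j) <;> simp [GP, ZMod.natCast_mod]

theorem neighborSet_inl (k : ℕ) (h1 : (1 : ZMod n) ≠ 0) (i : ZMod n) :
    (GP n k).neighborSet (.inl i) = {.inl (i + 1), .inl (i - 1), .inr i} := by
  ext (j | j) <;> simp [GP, ne_and_eq_add_or_eq_add_iff h1, eq_comm]

theorem neighborSet_inr {k : ℕ} (hk : (k : ZMod n) ≠ 0) (i : ZMod n) :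
    (GP n k).neighborSet (.inr i) = {.inl i, .inr (i + k), .inr (i - k)} := by
  ext (j | j) <;> simp [GP, ne_and_eq_add_or_eq_add_iff hk, eq_comm]

theorem bijOn_neighborSet_map {k : ℕ} (φ : ZMod n →+* ZMod m) (h1 : (1 : ZMod m) ≠ -1)
    (hk : (k : ZMod m) ≠ -k) (x : ZMod n ⊕ ZMod n) :
    Set.BijOn (Sum.map φ φ) ((GP n k).neighborSet x) ((GP m k).neighborSet (Sum.map φ φ x)) := by
  have ne_zero {a : ZMod m} (ha : a ≠ -a) : a ≠ 0 := by rintro rfl; simp at ha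
  have ne_zero_of_map {a : ZMod n} (ha : φ a ≠ 0) : a ≠ 0 := by rintro rfl; simp at ha
  rcases x with i | i
  · rw [neighborSet_inl k (ne_zero_of_map (by simpa using ne_zero h1)), Sum.map_inl,
      neighborSet_inl k (ne_zero h1)]
    convert Set.bijOn_triple (f := Sum.map φ φ) ?_ ?_ ?_ using 2 <;> simp [sub_eq_add_neg, h1]
  · rw [neighborSet_inr (ne_zero_of_map (by simpa using ne_zero hk)), Sum.map_inr,
      neighborSet_inr (ne_zero hk)]
    convert Set.bijOn_triple (f := Sum.map φ φ) ?_ ?_ ?_ using 2 <;> simp [sub_eq_add_neg, hk]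

def prismCode (j : ZMod 6) : Set (ZMod 6 ⊕ ZMod 6) :=
  {.inl j, .inl (j + 1), .inr (j + 3), .inr (j + 4)}

theorem isTotalPerfectCode_prismCode {k : ℕ} (hk : k % 6 = 1 ∨ k % 6 = 5) (j : ZMod 6) :
    IsTotalPerfectCode (GP 6 k) (prismCode j) := by
  revert j
  rw [← natCast_mod]
  rcases hk with hk | hk <;> rw [hk] <;>
    simp only [IsTotalPerfectCode, prismCode, ExistsUnique, Set.mem_insert_iff,
      Set.mem_singleton_iff] <;>
    decide

theorem preimage_prismCode (h : 6 ∣ n) (j : ℕ) :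
    Sum.map (ZMod.castHom h (ZMod 6)) (ZMod.castHom h (ZMod 6)) ⁻¹' prismCode j =
      {x | ∃ i : ZMod n, x = .inl (6 * i + (j : ZMod n)) ∨
        x = .inl (6 * i + (j : ZMod n) + 1) ∨
        x = .inr (6 * i + (j : ZMod n) + 3) ∨
        x = .inr (6 * i + (j : ZMod n) + 4)} := by
  have key := ZMod.exists_eq_mul_add_iff h
  push_cast at key
  ext (a | a) <;> simp [prismCode, exists_or, add_assoc, key, map_ofNat, -ZMod.castHom_apply]

end GP

theorem stmt_2_general (n k : ℕ)
    (h6 : n % 6 = 0) (hk6 : k % 6 = 1 ∨ k % 6 = 5) (j : ℕ) :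
    IsTotalPerfectCode (GP n k)
      {x | ∃ i : ZMod n, x = .inl (6 * i + (j : ZMod n)) ∨
        x = .inl (6 * i + (j : ZMod n) + 1) ∨
        x = .inr (6 * i + (j : ZMod n) + 3) ∨
        x = .inr (6 * i + (j : ZMod n) + 4)} := by
  have h6n : 6 ∣ n := Nat.dvd_of_mod_eq_zero h6
  have hk : (k : ZMod 6) ≠ -k := by
    rw [← ZMod.natCast_mod]
    rcases hk6 with hk6 | hk6 <;> rw [hk6] <;> decide
  rw [← GP.preimage_prismCode h6n]
  exact (GP.isTotalPerfectCode_prismCode hk6 j).preimage_s2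
    (GP.bijOn_neighborSet_map _ (by decide) hk)

/-- Lemma 2.3: for n ≡ 0 (mod 6) and k ≡ ±1 (mod 6),
C'_j = {u_{6i+j}, u_{6i+j+1}, v_{6i+j+3}, v_{6i+j+4} : i ∈ ℤ_n}
is a total perfect code in GP(n,k), for each j ∈ {0,...,5}. -/
theorem stmt_2 (n k : ℕ) (hn : 3 ≤ n) (hk0 : (k : ZMod n) ≠ 0)
    (h6 : n % 6 = 0) (hk6 : k % 6 = 1 ∨ k % 6 = 5) (j : ℕ) (hj : j < 6) :
    IsTotalPerfectCode (GP n k)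
      {x | ∃ i : ZMod n, x = .inl (6 * i + (j : ZMod n)) ∨
        x = .inl (6 * i + (j : ZMod n) + 1) ∨
        x = .inr (6 * i + (j : ZMod n) + 3) ∨
        x = .inr (6 * i + (j : ZMod n) + 4)} :=
  stmt_2_general n k h6 hk6 j
end

section
/- Let C be a perfect code in GP(n,k) with C ∩ U = {u_{4i+j} : i ∈ ℤ_n} for some j ∈ {0,1,2,3}, where U = {u_i : i ∈ ℤ_n}. Then C ∩ V = {v_{4i+j+2} : i ∈ ℤ_n}, where V = {v_i : i ∈ ℤ_n}; hence C = {u_{4i+j}, v_{4i+j+2} : i ∈ ℤ_n}. -/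
theorem ZMod.exists_eq_mul_add_iff_castHom_eq {n d : ℕ} (hd : d ∣ n) (m c : ZMod n) :
    (∃ i : ZMod n, m = d * i + c) ↔ castHom hd (ZMod d) m = castHom hd (ZMod d) c := by
  constructor
  · rintro ⟨i, rfl⟩
    rw [map_add, map_mul, map_natCast, ZMod.natCast_self, zero_mul, zero_add]
  · intro h
    rw [← sub_eq_zero, ← map_sub] at h
    obtain ⟨z, hz⟩ := ZMod.intCast_surjective (m - c)
    rw [← hz, map_intCast, ZMod.intCast_zmod_eq_zero_iff_dvd] at h
    obtain ⟨t, rfl⟩ := h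
    exact ⟨t, by push_cast at hz; linear_combination -hz⟩

namespace IsPerfectCode

variable {V : Type*} {G : SimpleGraph V} {C : Set V}

theorem not_adj (hC : IsPerfectCode G C) {x y : V} (hx : x ∈ C) (hy : y ∈ C) : ¬G.Adj x y :=
  hC.1 x hx y hy

theorem exists_adj_of_notMem (hC : IsPerfectCode G C) {x : V} (hx : x ∉ C) :
    ∃ y ∈ C, G.Adj x y :=
  (hC.2 x hx).exists

theorem eq_of_adj_of_notMem (hC : IsPerfectCode G C) {x y z : V} (hx : x ∉ C) (hy : y ∈ C)
    (hz : z ∈ C) (hxy : G.Adj x y) (hxz : G.Adj x z) : y = z :=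
  (hC.2 x hx).unique ⟨hy, hxy⟩ ⟨hz, hxz⟩

end IsPerfectCode

namespace GP

variable {n k : ℕ}

theorem adj_inl_iff (h1 : (1 : ZMod n) ≠ 0) (a : ZMod n) (y : ZMod n ⊕ ZMod n) :
    (GP n k).Adj (.inl a) y ↔ y = .inl (a + 1) ∨ y = .inl (a - 1) ∨ y = .inr a := by
  rcases y with b | b
  · simp only [GP, Sum.inl.injEq, reduceCtorEq, or_false, eq_sub_iff_add_eq]
    constructor
    · rintro ⟨-, h | h⟩
      exacts [.inl h, .inr h.symm]
    · rintro (rfl | rfl)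
      · exact ⟨by simpa using h1, .inl rfl⟩
      · exact ⟨by simpa using h1, .inr rfl⟩
  · simp only [GP, reduceCtorEq, Sum.inr.injEq, false_or]
    exact eq_comm

theorem inr_mem_iff_of_inl_mem_iff {C : Set (ZMod n ⊕ ZMod n)} (hC : IsPerfectCode (GP n k) C)
    (r : ZMod n →+* ZMod 4) {c : ZMod 4} (hU : ∀ m, Sum.inl m ∈ C ↔ r m = c) (m : ZMod n) :
    Sum.inr m ∈ C ↔ r m = c + 2 := by
  have h1 : (1 : ZMod n) ≠ 0 := fun h => absurd (by simpa using congrArg r h) (by decide)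
  have adj a y := (adj_inl_iff (k := k) h1 a y).2
  constructor
  · intro hv
    obtain h | h | h | h : r m = c ∨ r m = c + 1 ∨ r m = c + 2 ∨ r m = c + 3 := by
      have cases4 : ∀ c x : ZMod 4, x = c ∨ x = c + 1 ∨ x = c + 2 ∨ x = c + 3 := by decide
      exact cases4 c (r m)
    · exact absurd (adj m _ (.inr (.inr rfl))) (hC.not_adj ((hU m).2 h) hv)
    · have hum : Sum.inl m ∉ C := by rw [hU, h, add_eq_left]; decide
      have hpred : Sum.inl (m - 1) ∈ C :=
        (hU _).2 (by rw [map_sub, map_one, h, add_sub_cancel_right])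
      nomatch hC.eq_of_adj_of_notMem hum hpred hv
        (adj m _ (.inr (.inl rfl))) (adj m _ (.inr (.inr rfl)))
    · exact h
    · have hum : Sum.inl m ∉ C := by rw [hU, h, add_eq_left]; decide
      have hsucc : Sum.inl (m + 1) ∈ C :=
        (hU _).2 (by rw [map_add, map_one, h, add_assoc, add_eq_left]; decide)
      nomatch hC.eq_of_adj_of_notMem hum hsucc hv
        (adj m _ (.inl rfl)) (adj m _ (.inr (.inr rfl)))
  · intro h
    have hum : Sum.inl m ∉ C := by rw [hU, h, add_eq_left]; decide
    obtain ⟨y, hy, hmy⟩ := hC.exists_adj_of_notMem hum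
    rcases (adj_inl_iff h1 m y).1 hmy with rfl | rfl | rfl
    · rw [hU, map_add, map_one, h, add_assoc, add_eq_left] at hy
      exact absurd hy (by decide)
    · rw [hU, map_sub, map_one, h, add_sub_assoc, add_eq_left] at hy
      exact absurd hy (by decide)
    · exact hy

end GP

theorem stmt_5_general (n k : ℕ) (h4 : n % 4 = 0)
    (C : Set (ZMod n ⊕ ZMod n)) (hC : IsPerfectCode (GP n k) C)
    (j : ℕ)
    (hU : ∀ m : ZMod n, Sum.inl m ∈ C ↔ ∃ i : ZMod n, m = 4 * i + (j : ZMod n)) :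
    (∀ m : ZMod n, Sum.inr m ∈ C ↔ ∃ i : ZMod n, m = 4 * i + (j : ZMod n) + 2) ∧
    C = {x | ∃ i : ZMod n, x = .inl (4 * i + (j : ZMod n)) ∨
      x = .inr (4 * i + (j : ZMod n) + 2)} := by
  set r := ZMod.castHom (Nat.dvd_of_mod_eq_zero h4) (ZMod 4)
  have hres (m c : ZMod n) : (∃ i : ZMod n, m = 4 * i + c) ↔ r m = r c := by
    exact_mod_cast ZMod.exists_eq_mul_add_iff_castHom_eq _ m c
  have hV (m : ZMod n) : Sum.inr m ∈ C ↔ ∃ i : ZMod n, m = 4 * i + (j : ZMod n) + 2 := by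
    simp only [GP.inr_mem_iff_of_inl_mem_iff hC r (fun m => (hU m).trans (hres m j)), add_assoc,
      hres, map_add, map_ofNat]
  refine ⟨hV, Set.ext ?_⟩
  rintro (m | m) <;> simp [hU, hV]

/-- Step 3 of the proof of Theorem 1.1: if C is a perfect code in GP(n,k) with
C ∩ U = {u_{4i+j} : i ∈ ℤ_n}, then C ∩ V = {v_{4i+j+2} : i ∈ ℤ_n}, hence
C = {u_{4i+j}, v_{4i+j+2} : i ∈ ℤ_n}. -/
theorem stmt_5 (n k : ℕ) (hn : 3 ≤ n) (hk0 : (k : ZMod n) ≠ 0) (h4 : n % 4 = 0)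
    (C : Set (ZMod n ⊕ ZMod n)) (hC : IsPerfectCode (GP n k) C)
    (j : ℕ) (hj : j < 4)
    (hU : ∀ m : ZMod n, Sum.inl m ∈ C ↔ ∃ i : ZMod n, m = 4 * i + (j : ZMod n)) :
    (∀ m : ZMod n, Sum.inr m ∈ C ↔ ∃ i : ZMod n, m = 4 * i + (j : ZMod n) + 2) ∧
    C = {x | ∃ i : ZMod n, x = .inl (4 * i + (j : ZMod n)) ∨
      x = .inr (4 * i + (j : ZMod n) + 2)} :=
  stmt_5_general n k h4 C hC j hU
end
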